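/- arXiv:2407.06197 — 2 statements merged into one kernel-verified Lean document; each statement's English description precedes it below -/
import Mathlib

section
/- Let n ≥ 3 and let G_n be the graph on the 2n vertices a_0, …, a_{n−1}, b_0, …, b_{n−1} whose edges are: all pairs a_i a_j (i ≠ j), all pairs b_i b_j (i ≠ j), and the intercommunity edges a_i b_i for i = 0, …, n−2. Then for every α ∈ [0,1], the 1-Wasserstein distance between the α-lazy random walk measures at a_0 and b_0 satisfies W(m_{a_0}, m_{b_0}) ≤ 1; equivalently, κ^α(a_0 b_0) ≥ 0. -/
open Finset

/-- A probability measure on the vertex set. -/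
def IsProbMeasure {V : Type*} [Fintype V] (μ : V → ℝ) : Prop :=
  (∀ z, 0 ≤ μ z) ∧ ∑ z, μ z = 1

/-- A transference plan between two probability measures. -/
def IsTransferencePlan {V : Type*} [Fintype V] (μ ν : V → ℝ) (π : V → V → ℝ) : Prop :=
  (∀ i j, 0 ≤ π i j) ∧ (∀ i, ∑ j, π i j = μ i) ∧ (∀ j, ∑ i, π i j = ν j)

/-- The 1-Wasserstein distance between two measures on a graph:
the infimum of the transport cost over all transference plans. -/
noncomputable def Wass {V : Type*} [Fintype V] (G : SimpleGraph V) (μ ν : V → ℝ) : ℝ :=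
  sInf {c : ℝ | ∃ π : V → V → ℝ, IsTransferencePlan μ ν π ∧
    c = ∑ i : V, ∑ j : V, π i j * (G.dist i j : ℝ)}

open scoped Classical in
/-- The α-lazy random walk measure at a vertex `x`:
mass α at `x`, mass (1-α)/dₓ at each neighbour of `x`. -/
noncomputable def lazyWalk {V : Type*} [Fintype V] (G : SimpleGraph V) (α : ℝ) (x : V) :
    V → ℝ :=
  fun z =>
    if z = x then α
    else if G.Adj x z then (1 - α) / ((G.neighborSet x).ncard : ℝ) else 0

/-- The α-Ollivier-Ricci curvature of the edge `xy`: κ = 1 − W(mₓ, m_y). -/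
noncomputable def kappa {V : Type*} [Fintype V] (G : SimpleGraph V) (α : ℝ) (x y : V) : ℝ :=
  1 - Wass G (lazyWalk G α x) (lazyWalk G α y)

/-- The graph on vertices `a₀,…,a_{n−1}` (the `Sum.inl` copy of `Fin n`) and
`b₀,…,b_{n−1}` (the `Sum.inr` copy): both copies are complete graphs, and the
intercommunity edges are `aᵢbᵢ` for `i = 0,…,n−2`. -/
def Gn (n : ℕ) : SimpleGraph (Fin n ⊕ Fin n) :=
  SimpleGraph.fromRel (fun u v =>
    match u, v with
    | Sum.inl _, Sum.inl _ => True
    | Sum.inr _, Sum.inr _ => True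
    | Sum.inl i, Sum.inr j => i = j ∧ (i : ℕ) < n - 1
    | Sum.inr _, Sum.inl _ => False)

lemma Gn_adj_ll {n : ℕ} (i j : Fin n) : (Gn n).Adj (Sum.inl i) (Sum.inl j) ↔ i ≠ j := by
  rw [Gn, SimpleGraph.fromRel_adj]; simp

lemma Gn_adj_rr {n : ℕ} (i j : Fin n) : (Gn n).Adj (Sum.inr i) (Sum.inr j) ↔ i ≠ j := by
  rw [Gn, SimpleGraph.fromRel_adj]; simp

lemma Gn_adj_lr {n : ℕ} (i j : Fin n) :
    (Gn n).Adj (Sum.inl i) (Sum.inr j) ↔ i = j ∧ (i : ℕ) < n - 1 := by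
  rw [Gn, SimpleGraph.fromRel_adj]; simp

lemma Gn_adj_rl {n : ℕ} (i j : Fin n) :
    (Gn n).Adj (Sum.inr i) (Sum.inl j) ↔ j = i ∧ (j : ℕ) < n - 1 := by
  rw [Gn, SimpleGraph.fromRel_adj]; simp

lemma Gn_ncard_l {n : ℕ} (hn : 3 ≤ n) (z0 : Fin n) (hz0 : (z0 : ℕ) = 0) :
    ((Gn n).neighborSet (Sum.inl z0)).ncard = n := by
  have h : (Gn n).neighborSet (Sum.inl z0)
      = ↑((((univ : Finset (Fin n)).erase z0).image Sum.inl) ∪ {Sum.inr z0}) := by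
    ext v
    cases v with
    | inl i => simp [SimpleGraph.mem_neighborSet, Gn_adj_ll, eq_comm, Ne]
    | inr i =>
        simp [SimpleGraph.mem_neighborSet, Gn_adj_lr, hz0, eq_comm]
        omega
  rw [h, Set.ncard_coe_finset, Finset.card_union_of_disjoint (by simp),
    Finset.card_image_of_injective _ Sum.inl_injective, Finset.card_erase_of_mem (mem_univ _),
    Finset.card_univ, Fintype.card_fin, Finset.card_singleton]
  omega

lemma Gn_ncard_r {n : ℕ} (hn : 3 ≤ n) (z0 : Fin n) (hz0 : (z0 : ℕ) = 0) :
    ((Gn n).neighborSet (Sum.inr z0)).ncard = n := by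
  have h : (Gn n).neighborSet (Sum.inr z0)
      = ↑((((univ : Finset (Fin n)).erase z0).image Sum.inr) ∪ {Sum.inl z0}) := by
    ext v
    cases v with
    | inr i => simp [SimpleGraph.mem_neighborSet, Gn_adj_rr, eq_comm, Ne]
    | inl i =>
        simp [SimpleGraph.mem_neighborSet, Gn_adj_rl, hz0, eq_comm]
        omega
  rw [h, Set.ncard_coe_finset, Finset.card_union_of_disjoint (by simp),
    Finset.card_image_of_injective _ Sum.inr_injective, Finset.card_erase_of_mem (mem_univ _),
    Finset.card_univ, Fintype.card_fin, Finset.card_singleton]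
  omega

/-- The explicit transference plan: mass α from a₀ to b₀, mass β along aⱼ→bⱼ for
0 < j < n-1, mass β from a_{n-1} to a₀, and mass β from b₀ to b_{n-1}. -/
def plan {n : ℕ} (α β : ℝ) (z0 zl : Fin n) : (Fin n ⊕ Fin n) → (Fin n ⊕ Fin n) → ℝ :=
  fun u v =>
    match u, v with
    | Sum.inl i, Sum.inl j => if i = zl ∧ j = z0 then β else 0
    | Sum.inl i, Sum.inr j => if j = i then (if i = z0 then α else if i = zl then 0 else β) else 0
    | Sum.inr i, Sum.inr j => if i = z0 ∧ j = zl then β else 0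
    | Sum.inr _, Sum.inl _ => 0

/-- In the graph `Gn n` (`n ≥ 3`), the Wasserstein distance between the
α-lazy random walk measures at `a₀` and `b₀` is at most `1`; equivalently,
`κ^α(a₀b₀) ≥ 0`, for every `α ∈ [0,1]`. -/
theorem wasserstein_le_one_config (n : ℕ) (hn : 3 ≤ n)
    (α : ℝ) (hα0 : 0 ≤ α) (hα1 : α ≤ 1) :
    Wass (Gn n) (lazyWalk (Gn n) α (Sum.inl ⟨0, by omega⟩))
        (lazyWalk (Gn n) α (Sum.inr ⟨0, by omega⟩)) ≤ 1 ∧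
    0 ≤ kappa (Gn n) α (Sum.inl ⟨0, by omega⟩) (Sum.inr ⟨0, by omega⟩) := by
  set z0 : Fin n := ⟨0, by omega⟩ with hz0def
  set zl : Fin n := ⟨n - 1, by omega⟩ with hzldef
  have hz0 : (z0 : ℕ) = 0 := rfl
  have hzl : (zl : ℕ) = n - 1 := rfl
  have hz0l : z0 ≠ zl := by
    simp only [hz0def, hzldef, Fin.ext_iff]
    omega
  have hnR : (0 : ℝ) < (n : ℝ) := by positivity
  set β : ℝ := (1 - α) / (n : ℝ) with hβdef
  have hβ0 : 0 ≤ β := by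
    apply div_nonneg (by linarith) (le_of_lt hnR)
  set μ := lazyWalk (Gn n) α (Sum.inl z0) with hμdef
  set ν := lazyWalk (Gn n) α (Sum.inr z0) with hνdef
  -- values of μ
  have hμl : ∀ i : Fin n, μ (Sum.inl i) = if i = z0 then α else β := by
    intro i
    by_cases hi : i = z0
    · subst hi; simp [hμdef, lazyWalk]
    · rw [hμdef, lazyWalk, if_neg (by simp [hi]),
        if_pos ((Gn_adj_ll z0 i).mpr (Ne.symm hi)), Gn_ncard_l hn z0 hz0, if_neg hi]
  have hμr : ∀ i : Fin n, μ (Sum.inr i) = if i = z0 then β else 0 := by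
    intro i
    by_cases hi : i = z0
    · subst hi
      rw [hμdef, lazyWalk, if_neg (by simp),
        if_pos ((Gn_adj_lr z0 z0).mpr ⟨rfl, by omega⟩), Gn_ncard_l hn z0 hz0, if_pos rfl]
    · rw [hμdef, lazyWalk, if_neg (by simp), if_neg, if_neg hi]
      rw [Gn_adj_lr]
      rintro ⟨h1, -⟩
      exact hi h1.symm
  have hνr : ∀ i : Fin n, ν (Sum.inr i) = if i = z0 then α else β := by
    intro i
    by_cases hi : i = z0
    · subst hi; simp [hνdef, lazyWalk]
    · rw [hνdef, lazyWalk, if_neg (by simp [hi]),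
        if_pos ((Gn_adj_rr z0 i).mpr (Ne.symm hi)), Gn_ncard_r hn z0 hz0, if_neg hi]
  have hνl : ∀ i : Fin n, ν (Sum.inl i) = if i = z0 then β else 0 := by
    intro i
    by_cases hi : i = z0
    · subst hi
      rw [hνdef, lazyWalk, if_neg (by simp),
        if_pos ((Gn_adj_rl z0 z0).mpr ⟨rfl, by omega⟩), Gn_ncard_r hn z0 hz0, if_pos rfl]
    · rw [hνdef, lazyWalk, if_neg (by simp), if_neg, if_neg hi]
      rw [Gn_adj_rl]
      rintro ⟨h1, -⟩
      exact hi h1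
  set π := plan α β z0 zl with hπdef
  -- nonnegativity
  have hπ0 : ∀ u v, 0 ≤ π u v := by
    intro u v
    cases u <;> cases v <;> simp only [hπdef, plan] <;>
      first
        | exact le_refl 0
        | (split_ifs <;> first | exact le_refl 0 | exact hα0 | exact hβ0)
  -- row marginals
  have hrow : ∀ u, ∑ v, π u v = μ u := by
    intro u
    cases u with
    | inl i =>
        rw [Fintype.sum_sum_type]
        simp only [hπdef, plan]
        rw [hμl i]
        by_cases hi0 : i = z0
        · subst hi0
          simp [if_neg (Ne.symm hz0l), hz0l, ite_and]
        · by_cases hil : i = zl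
          · subst hil
            simp [if_neg hi0, ite_and, hi0]
          · simp [ite_and, hil, hi0]
    | inr i =>
        rw [Fintype.sum_sum_type]
        simp only [hπdef, plan]
        rw [hμr i]
        by_cases hi0 : i = z0
        · subst hi0
          simp [ite_and]
        · simp [ite_and, hi0]
  -- column marginals
  have hcol : ∀ v, ∑ u, π u v = ν v := by
    intro v
    cases v with
    | inl j =>
        rw [Fintype.sum_sum_type]
        simp only [hπdef, plan]
        rw [hνl j]
        by_cases hj0 : j = z0
        · subst hj0
          simp [ite_and]
        · simp [ite_and, hj0]
    | inr j =>
        rw [Fintype.sum_sum_type]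
        simp only [hπdef, plan]
        rw [hνr j]
        by_cases hj0 : j = z0
        · subst hj0
          simp [ite_and, hz0l]
        · by_cases hjl : j = zl
          · subst hjl
            simp [ite_and, hj0]
          · simp [ite_and, hj0, hjl]
  -- each nonzero entry of the plan sits on an edge, so cost term = mass
  have hcost_term : ∀ u v, π u v * ((Gn n).dist u v : ℝ) = π u v := by
    intro u v
    cases u with
    | inl i =>
        cases v with
        | inl j =>
            simp only [hπdef, plan]
            split_ifs with h
            · obtain ⟨hi, hj⟩ := h
              have hadj : (Gn n).Adj (Sum.inl i) (Sum.inl j) := by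
                rw [Gn_adj_ll]
                subst hi; subst hj
                exact Ne.symm hz0l
              rw [SimpleGraph.dist_eq_one_iff_adj.mpr hadj]
              norm_num
            · exact zero_mul _
        | inr j =>
            simp only [hπdef, plan]
            split_ifs with h h0 hl
            · -- j = i, i = z0 : mass α, need adjacency
              have hadj : (Gn n).Adj (Sum.inl i) (Sum.inr j) := by
                rw [Gn_adj_lr]
                exact ⟨h.symm, by rw [h0, hz0]; omega⟩
              rw [SimpleGraph.dist_eq_one_iff_adj.mpr hadj]
              norm_num
            · exact zero_mul _
            · -- j = i, i ≠ z0, i ≠ zl : mass β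
              have hadj : (Gn n).Adj (Sum.inl i) (Sum.inr j) := by
                rw [Gn_adj_lr]
                refine ⟨h.symm, ?_⟩
                have h1 := i.isLt
                have h2 : (i : ℕ) ≠ n - 1 := fun hc => hl (by rw [Fin.ext_iff]; omega)
                omega
              rw [SimpleGraph.dist_eq_one_iff_adj.mpr hadj]
              norm_num
            · exact zero_mul _
    | inr i =>
        cases v with
        | inl j => simp [hπdef, plan]
        | inr j =>
            simp only [hπdef, plan]
            split_ifs with h
            · obtain ⟨hi, hj⟩ := h
              have hadj : (Gn n).Adj (Sum.inr i) (Sum.inr j) := by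
                rw [Gn_adj_rr]
                subst hi; subst hj
                exact hz0l
              rw [SimpleGraph.dist_eq_one_iff_adj.mpr hadj]
              norm_num
            · exact zero_mul _
  -- total mass of μ is 1
  have hμtot : ∑ u, μ u = 1 := by
    rw [Fintype.sum_sum_type]
    have h1 : ∑ i : Fin n, μ (Sum.inl i) = α + (n - 1) * β := by
      rw [← Finset.add_sum_erase _ _ (mem_univ z0), hμl z0, if_pos rfl]
      congr 1
      rw [Finset.sum_congr rfl (fun i hi => by
        rw [hμl i, if_neg (Finset.ne_of_mem_erase hi)]),
        Finset.sum_const, Finset.card_erase_of_mem (mem_univ _), Finset.card_univ,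
        Fintype.card_fin, nsmul_eq_mul, Nat.cast_sub (by omega : 1 ≤ n), Nat.cast_one]
    have h2 : ∑ i : Fin n, μ (Sum.inr i) = β := by
      rw [Finset.sum_congr rfl (fun i _ => hμr i)]
      simp
    rw [h1, h2, hβdef]
    field_simp
    ring
  -- the cost of the plan is 1
  have hcost : ∑ u : Fin n ⊕ Fin n, ∑ v : Fin n ⊕ Fin n, π u v * ((Gn n).dist u v : ℝ) = 1 := by
    calc ∑ u : Fin n ⊕ Fin n, ∑ v : Fin n ⊕ Fin n, π u v * ((Gn n).dist u v : ℝ)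
        = ∑ u : Fin n ⊕ Fin n, ∑ v : Fin n ⊕ Fin n, π u v := by
          exact Finset.sum_congr rfl (fun u _ => Finset.sum_congr rfl (fun v _ => hcost_term u v))
      _ = ∑ u, μ u := Finset.sum_congr rfl (fun u _ => hrow u)
      _ = 1 := hμtot
  have hmem : (1:ℝ) ∈ {c : ℝ | ∃ π' : (Fin n ⊕ Fin n) → (Fin n ⊕ Fin n) → ℝ,
      IsTransferencePlan μ ν π' ∧
      c = ∑ i : Fin n ⊕ Fin n, ∑ j : Fin n ⊕ Fin n, π' i j * ((Gn n).dist i j : ℝ)} :=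
    ⟨π, ⟨hπ0, hrow, hcol⟩, hcost.symm⟩
  have hbdd : BddBelow {c : ℝ | ∃ π' : (Fin n ⊕ Fin n) → (Fin n ⊕ Fin n) → ℝ,
      IsTransferencePlan μ ν π' ∧
      c = ∑ i : Fin n ⊕ Fin n, ∑ j : Fin n ⊕ Fin n, π' i j * ((Gn n).dist i j : ℝ)} := by
    refine ⟨0, ?_⟩
    rintro c ⟨π', hπ', rfl⟩
    apply Finset.sum_nonneg
    intro i _
    apply Finset.sum_nonneg
    intro j _
    exact mul_nonneg (hπ'.1 i j) (by positivity)
  have hW : Wass (Gn n) μ ν ≤ 1 := csInf_le hbdd hmem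
  exact ⟨hW, by rw [kappa]; linarith⟩
end

section
/- Let m, n ≥ 2 and let G be the 'dumbbell' graph consisting of two disjoint complete graphs of sizes m and n together with exactly one additional edge xy joining a vertex x of the m-clique to a vertex y of the n-clique. Then for every α ∈ [0,1], κ^α(xy) = 2(1−α)(1/m + 1/n − 1). In particular, κ^α(xy) < 0 whenever m, n ≥ 3 and α < 1. -/
open Finset

/-- The 'dumbbell' graph: two disjoint complete graphs on `Fin m` (the `Sum.inl` copy) and
`Fin n` (the `Sum.inr` copy), joined by the single additional edge between vertex `0` of
the `m`-clique and vertex `0` of the `n`-clique. -/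
def dumbbell (m n : ℕ) : SimpleGraph (Fin m ⊕ Fin n) :=
  SimpleGraph.fromRel (fun u v =>
    match u, v with
    | Sum.inl _, Sum.inl _ => True
    | Sum.inr _, Sum.inr _ => True
    | Sum.inl i, Sum.inr j => (i : ℕ) = 0 ∧ (j : ℕ) = 0
    | Sum.inr _, Sum.inl _ => False)

/-! The lower bound `W(mₓ, m_y) ≥ 3 - 2α - 2(1-α)/m - 2(1-α)/n` comes from the `1`-Lipschitz
potential equal to `3` on the `m`-clique minus `x`, `2` at `x`, `1` at `y` and `0` on the
`n`-clique minus `y`. The product coupling `mₓ ⊗ m_y` only moves mass between vertices whose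
potentials differ by exactly their distance, except for the mass it sends from `y` to `x`;
exchanging that mass with an equal amount sent from some `x₁ ≠ x` to some `y₁ ≠ y` (rerouting
it as `x₁ → x` and `y → y₁`) gives a plan on which the potential is tight, so the bound is
attained. -/

open SimpleGraph

section Transport

variable {V : Type*} [Fintype V] {G : SimpleGraph V} {μ ν : V → ℝ} {π : V → V → ℝ}

lemma IsTransferencePlan.sum_mul_sub_sum_mul (hπ : IsTransferencePlan μ ν π) (f : V → ℝ) :
    ∑ i, μ i * f i - ∑ j, ν j * f j = ∑ i, ∑ j, π i j * (f i - f j) := by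
  obtain ⟨-, hrow, hcol⟩ := hπ
  simp only [mul_sub, sum_sub_distrib, ← sum_mul, hrow]
  rw [sum_comm]
  simp only [← sum_mul, hcol]

lemma wass_le_cost (hπ : IsTransferencePlan μ ν π) :
    Wass G μ ν ≤ ∑ i, ∑ j, π i j * (G.dist i j : ℝ) := by
  refine csInf_le ⟨0, ?_⟩ ⟨π, hπ, rfl⟩
  rintro _ ⟨σ, hσ, rfl⟩
  exact sum_nonneg fun i _ => sum_nonneg fun j _ => mul_nonneg (hσ.1 i j) (Nat.cast_nonneg _)

lemma sum_mul_sub_sum_mul_le_wass (hπ : IsTransferencePlan μ ν π) {f : V → ℝ}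
    (hf : ∀ i j, f i - f j ≤ G.dist i j) :
    ∑ i, μ i * f i - ∑ j, ν j * f j ≤ Wass G μ ν := by
  refine le_csInf ⟨_, π, hπ, rfl⟩ ?_
  rintro _ ⟨σ, hσ, rfl⟩
  rw [hσ.sum_mul_sub_sum_mul]
  exact sum_le_sum fun i _ => sum_le_sum fun j _ => mul_le_mul_of_nonneg_left (hf i j) (hσ.1 i j)

theorem wass_eq_of_tight (hπ : IsTransferencePlan μ ν π) {f : V → ℝ}
    (hf : ∀ i j, f i - f j ≤ G.dist i j) (htight : ∀ i j, π i j ≠ 0 → G.dist i j ≤ f i - f j) :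
    Wass G μ ν = ∑ i, μ i * f i - ∑ j, ν j * f j := by
  refine le_antisymm ((wass_le_cost hπ).trans ?_) (sum_mul_sub_sum_mul_le_wass hπ hf)
  rw [hπ.sum_mul_sub_sum_mul]
  refine sum_le_sum fun i _ => sum_le_sum fun j _ => ?_
  by_cases h : π i j = 0
  · simp [h]
  · exact mul_le_mul_of_nonneg_left (htight i j h) (hπ.1 i j)

lemma isTransferencePlan_mul (hμ : IsProbMeasure μ) (hν : IsProbMeasure ν) :
    IsTransferencePlan μ ν fun i j => μ i * ν j :=
  ⟨fun i j => mul_nonneg (hμ.1 i) (hν.1 j), fun i => by rw [← mul_sum, hν.2, mul_one],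
    fun j => by rw [← sum_mul, hμ.2, one_mul]⟩

end Transport

section Swap

variable {V : Type*} [DecidableEq V] {μ ν : V → ℝ} {π : V → V → ℝ}

def swapMass (π : V → V → ℝ) (ε : ℝ) (u₁ v₁ u₂ v₂ : V) (u v : V) : ℝ :=
  π u v + ε * ((if u = u₁ ∧ v = v₂ then 1 else 0) + (if u = u₂ ∧ v = v₁ then 1 else 0)
    - (if u = u₁ ∧ v = v₁ then 1 else 0) - (if u = u₂ ∧ v = v₂ then 1 else 0))

lemma swapMass_ne_zero_imp {R : V → V → Prop} {ε : ℝ} {u₁ v₁ u₂ v₂ : V} (hε : ε = π u₂ v₂)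
    (hu : u₁ ≠ u₂) (hR : ∀ u v, π u v ≠ 0 → (u, v) ≠ (u₂, v₂) → R u v)
    (h₁₁ : R u₁ v₁) (h₁₂ : R u₁ v₂) (h₂₁ : R u₂ v₁) :
    ∀ u v, swapMass π ε u₁ v₁ u₂ v₂ u v ≠ 0 → R u v := by
  intro u v h
  by_cases hu₁ : u = u₁ <;> by_cases hu₂ : u = u₂ <;> by_cases hv₁ : v = v₁ <;>
      by_cases hv₂ : v = v₂ <;> simp_all [swapMass]

variable [Fintype V]

lemma IsTransferencePlan.swapMass (hπ : IsTransferencePlan μ ν π) {ε : ℝ} {u₁ v₁ u₂ v₂ : V}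
    (hε : 0 ≤ ε) (h₁ : ε ≤ π u₁ v₁) (h₂ : ε ≤ π u₂ v₂) (hu : u₁ ≠ u₂) :
    IsTransferencePlan μ ν (swapMass π ε u₁ v₁ u₂ v₂) := by
  obtain ⟨hnonneg, hrow, hcol⟩ := hπ
  refine ⟨fun u v => ?_, fun u => ?_, fun v => ?_⟩
  · have hlost : ε * ((if u = u₁ ∧ v = v₁ then 1 else 0) + (if u = u₂ ∧ v = v₂ then 1 else 0))
        ≤ π u v := by
      by_cases h₁₁ : u = u₁ ∧ v = v₁
      · obtain ⟨rfl, rfl⟩ := h₁₁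
        simpa [hu] using h₁
      · by_cases h₂₂ : u = u₂ ∧ v = v₂
        · obtain ⟨rfl, rfl⟩ := h₂₂
          simpa [hu.symm] using h₂
        · simp [h₁₁, h₂₂, hnonneg u v]
    have hgain :
        0 ≤ ε * ((if u = u₁ ∧ v = v₂ then 1 else 0) + (if u = u₂ ∧ v = v₁ then 1 else 0)) := by
      positivity
    unfold _root_.swapMass
    linarith
  · simp [_root_.swapMass, sum_add_distrib, ← mul_sum, hrow, ite_and]
  · simp [_root_.swapMass, sum_add_distrib, ← mul_sum, hcol, ite_and]

end Swap

section Graph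

variable {V : Type*} {G : SimpleGraph V}

lemma sub_le_dist_of_forall_adj {f : V → ℝ} (hG : G.Preconnected)
    (hf : ∀ u v, G.Adj u v → f u - f v ≤ 1) (u v : V) : f u - f v ≤ G.dist u v := by
  have walk : ∀ {u v : V} (p : G.Walk u v), f u - f v ≤ p.length := by
    intro u v p
    induction p with
    | nil => simp
    | cons h p ih =>
      push_cast [Walk.length_cons]
      linarith [hf _ _ h]
  obtain ⟨p, hp⟩ := (hG u v).exists_walk_length_eq_dist
  exact hp ▸ walk p

lemma isProbMeasure_lazyWalk [Fintype V] {α : ℝ} (hα₀ : 0 ≤ α) (hα₁ : α ≤ 1) {x : V}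
    (hx : (G.neighborSet x).ncard ≠ 0) : IsProbMeasure (lazyWalk G α x) := by
  classical
  refine ⟨fun z => by unfold lazyWalk; split_ifs <;> first | assumption | positivity, ?_⟩
  have hsplit : ∀ z, lazyWalk G α x z = (if z = x then α else 0) +
      (if G.Adj x z then (1 - α) / (G.neighborSet x).ncard else 0) := by
    intro z
    by_cases hz : z = x <;> simp [lazyWalk, hz]
  simp only [hsplit, sum_add_distrib, sum_ite_eq', mem_univ, if_true, sum_ite, sum_const_zero,
    sum_const, add_zero, nsmul_eq_mul]
  have hcard : (#{z | G.Adj x z} : ℝ) = (G.neighborSet x).ncard := by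
    rw [Set.ncard_eq_toFinset_card']
    simp
  rw [hcard]
  field_simp
  ring

end Graph

section Dumbbell

variable {m n : ℕ}

@[simp] lemma dumbbell_adj_inl_inl {i i' : Fin m} :
    (dumbbell m n).Adj (.inl i) (.inl i') ↔ i ≠ i' := by
  simp [dumbbell]

@[simp] lemma dumbbell_adj_inr_inr {j j' : Fin n} :
    (dumbbell m n).Adj (.inr j) (.inr j') ↔ j ≠ j' := by
  simp [dumbbell]

section

variable [NeZero m]

lemma dumbbell_dist_inl_inl_zero (i : Fin m) :
    (dumbbell m n).dist (.inl i) (.inl 0) = if i = 0 then 0 else 1 := by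
  split_ifs with hi
  · simp [hi]
  · exact dist_eq_one_iff_adj.2 (by simpa using hi)

end

section

variable [NeZero n]

lemma dumbbell_dist_inr_zero_inr (j : Fin n) :
    (dumbbell m n).dist (.inr 0) (.inr j) = if j = 0 then 0 else 1 := by
  split_ifs with hj
  · simp [hj]
  · exact dist_eq_one_iff_adj.2 (by simpa [eq_comm] using hj)

end

variable [NeZero m] [NeZero n]

@[simp] lemma dumbbell_adj_inl_inr {i : Fin m} {j : Fin n} :
    (dumbbell m n).Adj (.inl i) (.inr j) ↔ i = 0 ∧ j = 0 := by
  simp [dumbbell, Fin.val_eq_zero_iff]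

@[simp] lemma dumbbell_adj_inr_inl {i : Fin m} {j : Fin n} :
    (dumbbell m n).Adj (.inr j) (.inl i) ↔ i = 0 ∧ j = 0 := by
  rw [SimpleGraph.adj_comm, dumbbell_adj_inl_inr]

lemma ncard_neighborSet_dumbbell_inl_zero :
    ((dumbbell m n).neighborSet (.inl 0)).ncard = m := by
  classical
  rw [← coe_neighborFinset, Set.ncard_coe_finset, neighborFinset_eq_filter, card_filter,
    Fintype.sum_sum_type]
  obtain ⟨k, rfl⟩ := Nat.exists_eq_succ_of_ne_zero (NeZero.ne m)
  simp [Fin.sum_univ_succ, (Fin.succ_ne_zero _).symm]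

lemma ncard_neighborSet_dumbbell_inr_zero :
    ((dumbbell m n).neighborSet (.inr 0)).ncard = n := by
  classical
  rw [← coe_neighborFinset, Set.ncard_coe_finset, neighborFinset_eq_filter, card_filter,
    Fintype.sum_sum_type]
  obtain ⟨k, rfl⟩ := Nat.exists_eq_succ_of_ne_zero (NeZero.ne n)
  simp [Fin.sum_univ_succ, (Fin.succ_ne_zero _).symm, add_comm]

lemma lazyWalk_dumbbell_inl_zero (α : ℝ) : lazyWalk (dumbbell m n) α (.inl 0) =
    Sum.elim (fun i => if i = 0 then α else (1 - α) / m)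
      (fun j => if j = 0 then (1 - α) / m else 0) := by
  ext (i | j)
  · by_cases h : i = 0 <;> simp [lazyWalk, ncard_neighborSet_dumbbell_inl_zero, h, eq_comm]
  · by_cases h : j = 0 <;> simp [lazyWalk, ncard_neighborSet_dumbbell_inl_zero, h]

lemma lazyWalk_dumbbell_inr_zero (α : ℝ) : lazyWalk (dumbbell m n) α (.inr 0) =
    Sum.elim (fun i => if i = 0 then (1 - α) / n else 0)
      (fun j => if j = 0 then α else (1 - α) / n) := by
  ext (i | j)
  · by_cases h : i = 0 <;> simp [lazyWalk, ncard_neighborSet_dumbbell_inr_zero, h]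
  · by_cases h : j = 0 <;> simp [lazyWalk, ncard_neighborSet_dumbbell_inr_zero, h, eq_comm]

lemma dumbbell_reachable_inl_zero (v : Fin m ⊕ Fin n) :
    (dumbbell m n).Reachable v (.inl 0) := by
  have hxy : (dumbbell m n).Adj (.inr 0) (.inl 0) := by simp
  rcases v with i | j
  · by_cases hi : i = 0
    · simp [hi]
    · exact Adj.reachable (by simpa using hi)
  · by_cases hj : j = 0
    · exact hj ▸ hxy.reachable
    · have hjy : (dumbbell m n).Adj (.inr j) (.inr 0) := by simpa using hj
      exact hjy.reachable.trans hxy.reachable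

lemma dumbbell_connected : (dumbbell m n).Connected :=
  connected_iff_exists_forall_reachable _ |>.2
    ⟨.inl 0, fun v => (dumbbell_reachable_inl_zero v).symm⟩

def dumbbellPotential (m n : ℕ) [NeZero m] [NeZero n] : Fin m ⊕ Fin n → ℝ :=
  Sum.elim (fun i => if i = 0 then 2 else 3) (fun j => if j = 0 then 1 else 0)

lemma dumbbellPotential_sub_le_dist (u v : Fin m ⊕ Fin n) :
    dumbbellPotential m n u - dumbbellPotential m n v ≤ (dumbbell m n).dist u v := by
  refine sub_le_dist_of_forall_adj dumbbell_connected.preconnected (fun u v huv => ?_) u v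
  rcases u with i | j <;> rcases v with i' | j' <;>
    simp only [dumbbellPotential, Sum.elim_inl, Sum.elim_inr] <;> split_ifs <;> simp_all <;>
    norm_num

lemma dist_le_dumbbellPotential_sub {u v : Fin m ⊕ Fin n} (hu : ∀ j, u = .inr j → j = 0)
    (hv : ∀ i, v = .inl i → i = 0) (huv : (u, v) ≠ (.inr (0 : Fin n), .inl (0 : Fin m))) :
    (dumbbell m n).dist u v ≤ dumbbellPotential m n u - dumbbellPotential m n v := by
  rcases u with i | j <;> rcases v with i' | j'
  · obtain rfl := hv i' rfl
    rw [dumbbell_dist_inl_inl_zero]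
    split_ifs with hi <;> norm_num [dumbbellPotential, hi]
  · have hG : (dumbbell m n).Connected := dumbbell_connected
    have hpath : (dumbbell m n).dist (.inl i) (.inr j') ≤
        (if i = 0 then 0 else 1) + (1 + if j' = 0 then 0 else 1) :=
      calc (dumbbell m n).dist (.inl i) (.inr j')
          ≤ (dumbbell m n).dist (.inl i) (.inl 0) + (dumbbell m n).dist (.inl 0) (.inr j') :=
            hG.dist_triangle
        _ ≤ (dumbbell m n).dist (.inl i) (.inl 0) +
            ((dumbbell m n).dist (.inl 0) (.inr 0) + (dumbbell m n).dist (.inr 0) (.inr j')) :=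
            add_le_add le_rfl hG.dist_triangle
        _ = _ := by
          rw [dumbbell_dist_inl_inl_zero, dumbbell_dist_inr_zero_inr,
            dist_eq_one_iff_adj.2 (by simp)]
    refine (Nat.cast_le.2 hpath).trans ?_
    split_ifs <;> simp [dumbbellPotential, *] <;> norm_num
  · obtain rfl := hu j rfl
    obtain rfl := hv i' rfl
    exact absurd rfl huv
  · obtain rfl := hu j rfl
    rw [dumbbell_dist_inr_zero_inr]
    split_ifs with hj <;> simp [dumbbellPotential, hj]

lemma sum_lazyWalk_mul_dumbbellPotential (α : ℝ) :
    ∑ v, lazyWalk (dumbbell m n) α (.inl 0) v * dumbbellPotential m n v -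
        ∑ v, lazyWalk (dumbbell m n) α (.inr 0) v * dumbbellPotential m n v =
      3 - 2 * α - 2 * (1 - α) / m - 2 * (1 - α) / n := by
  rw [lazyWalk_dumbbell_inl_zero, lazyWalk_dumbbell_inr_zero]
  obtain ⟨k, rfl⟩ := Nat.exists_eq_succ_of_ne_zero (NeZero.ne m)
  obtain ⟨l, rfl⟩ := Nat.exists_eq_succ_of_ne_zero (NeZero.ne n)
  simp [Fintype.sum_sum_type, Fin.sum_univ_succ, dumbbellPotential]
  field_simp
  ring

theorem wass_lazyWalk_dumbbell (hm : 2 ≤ m) (hn : 2 ≤ n) {α : ℝ} (hα₀ : 0 ≤ α) (hα₁ : α ≤ 1) :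
    Wass (dumbbell m n) (lazyWalk (dumbbell m n) α (.inl 0))
        (lazyWalk (dumbbell m n) α (.inr 0)) =
      3 - 2 * α - 2 * (1 - α) / m - 2 * (1 - α) / n := by
  set μ := lazyWalk (dumbbell m n) α (.inl 0) with hμ_def
  set ν := lazyWalk (dumbbell m n) α (.inr 0) with hν_def
  have hμ : IsProbMeasure μ :=
    isProbMeasure_lazyWalk hα₀ hα₁ (by rw [ncard_neighborSet_dumbbell_inl_zero]; omega)
  have hν : IsProbMeasure ν :=
    isProbMeasure_lazyWalk hα₀ hα₁ (by rw [ncard_neighborSet_dumbbell_inr_zero]; omega)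
  obtain ⟨i₁, hi₁⟩ : ∃ i : Fin m, i ≠ 0 := ⟨⟨1, hm⟩, by simp [Fin.ext_iff]⟩
  obtain ⟨j₁, hj₁⟩ : ∃ j : Fin n, j ≠ 0 := ⟨⟨1, hn⟩, by simp [Fin.ext_iff]⟩
  have hε : μ (.inr 0) * ν (.inl 0) ≤ μ (.inl i₁) * ν (.inr j₁) := by
    simp [hμ_def, hν_def, lazyWalk_dumbbell_inl_zero, lazyWalk_dumbbell_inr_zero, hi₁, hj₁]
  have hπ := (isTransferencePlan_mul hμ hν).swapMass (mul_nonneg (hμ.1 _) (hν.1 _)) hε le_rfl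
    (by simp)
  have hsupp : ∀ u v, μ u * ν v ≠ 0 → (u, v) ≠ (.inr 0, .inl 0) →
      (dumbbell m n).dist u v ≤ dumbbellPotential m n u - dumbbellPotential m n v := by
    intro u v huv
    refine dist_le_dumbbellPotential_sub ?_ ?_
    · rintro j rfl
      by_contra hj
      simp [hμ_def, lazyWalk_dumbbell_inl_zero, hj] at huv
    · rintro i rfl
      by_contra hi
      simp [hν_def, lazyWalk_dumbbell_inr_zero, hi] at huv
  rw [wass_eq_of_tight hπ dumbbellPotential_sub_le_dist
    (swapMass_ne_zero_imp rfl (by simp) hsupp ?_ ?_ ?_), sum_lazyWalk_mul_dumbbellPotential]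
  all_goals exact dist_le_dumbbellPotential_sub (by simp) (by simp) (by simp)

end Dumbbell

/-- For the dumbbell graph with clique sizes `m, n ≥ 2`, the unique
intercommunity edge `xy` satisfies `κ^α(xy) = 2(1−α)(1/m + 1/n − 1)` for every `α ∈ [0,1]`;
in particular `κ^α(xy) < 0` whenever `m, n ≥ 3` and `α < 1`. -/
theorem curvature_dumbbell (m n : ℕ) (hm : 2 ≤ m) (hn : 2 ≤ n)
    (α : ℝ) (hα0 : 0 ≤ α) (hα1 : α ≤ 1) :
    kappa (dumbbell m n) α (Sum.inl ⟨0, by omega⟩) (Sum.inr ⟨0, by omega⟩) =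
      2 * (1 - α) * (1 / (m : ℝ) + 1 / (n : ℝ) - 1) ∧
    (3 ≤ m → 3 ≤ n → α < 1 →
      kappa (dumbbell m n) α (Sum.inl ⟨0, by omega⟩) (Sum.inr ⟨0, by omega⟩) < 0) := by
  have : NeZero m := ⟨by omega⟩
  have : NeZero n := ⟨by omega⟩
  have hκ : kappa (dumbbell m n) α (.inl ⟨0, by omega⟩) (.inr ⟨0, by omega⟩) =
      2 * (1 - α) * (1 / (m : ℝ) + 1 / (n : ℝ) - 1) := by
    rw [kappa, Fin.mk_zero', Fin.mk_zero', wass_lazyWalk_dumbbell hm hn hα0 hα1]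
    ring
  refine ⟨hκ, fun h3m h3n hα => hκ ▸ mul_neg_of_pos_of_neg (by linarith) ?_⟩
  have h1 : 1 / (m : ℝ) ≤ 1 / 3 := one_div_le_one_div_of_le (by norm_num) (by exact_mod_cast h3m)
  have h2 : 1 / (n : ℝ) ≤ 1 / 3 := one_div_le_one_div_of_le (by norm_num) (by exact_mod_cast h3n)
  linarith
end
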